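/- arXiv:1506.03303 — 2 statements merged into one kernel-verified Lean document; each statement's English description precedes it below -/
import Mathlib

section
/- Let G be a finite group, F a field with char(F) not dividing |G|, H ⊆ K subgroups of G, e = Ĥ − K̂, A a transversal of K in G, and τ a transversal of H in K containing 1. Then the set { r(1−t)Ĥ : r ∈ A, t ∈ τ \ {1} } is an F-basis of the left ideal (FG)e. -/
open scoped Classical

/-- `hat F S` is the element `Ŝ = (1/|S|) ∑_{s ∈ S} s` of the group algebra `F G`. -/
noncomputable def hat (F : Type*) [Field F] {G : Type*} [Group G] [Fintype G]
    (S : Subgroup G) : MonoidAlgebra F G :=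
  (Nat.card S : F)⁻¹ • ∑ g : G, if g ∈ S then MonoidAlgebra.of F G g else 0

/-!
Put `e = Ĥ - K̂`. Since `t K̂ = K̂` for `t ∈ K`, each `r (1 - t) Ĥ` equals `r (1 - t) e` and so lies
in `FG e`. Conversely, every `g ∈ G` factors as `g = r t h` with `r ∈ A`, `t ∈ τ`, `h ∈ H`, which
gives `g e = r e - r (1 - t) Ĥ`; and `∑_{s ∈ τ} s Ĥ = |τ| K̂` gives `e = |τ|⁻¹ ∑_{s ∈ τ} (1 - s) Ĥ`.
So the family spans `FG e`. It is linearly independent because the cosets `r t H` are pairwise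
distinct: the coefficient of `r (1 - t) Ĥ` at `r' t'` (with `t' ≠ 1`) is `-|H|⁻¹` if
`(r, t) = (r', t')` and `0` otherwise.
-/

open MonoidAlgebra

section Transversal

variable {G : Type*} [Group G]

theorem card_mul_card_eq_card_of_existsUnique {H K : Subgroup G} {τ : Set G} (hHK : H ≤ K)
    (hτK : τ ⊆ K) (hτ : ∀ k ∈ K, ∃! t, t ∈ τ ∧ t⁻¹ * k ∈ H) :
    Nat.card τ * Nat.card H = Nat.card K := by
  have hcompl : Subgroup.IsComplement (((↑) : K → G) ⁻¹' τ) (H.subgroupOf K) := by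
    rw [Subgroup.isComplement_iff_existsUnique_inv_mul_mem]
    rintro ⟨k, hk⟩
    obtain ⟨t, ⟨htτ, htH⟩, huniq⟩ := hτ k hk
    refine ⟨⟨⟨t, hτK htτ⟩, htτ⟩, by simpa [Subgroup.mem_subgroupOf] using htH, ?_⟩
    rintro ⟨⟨s, hsK⟩, hsτ⟩ hs
    ext
    exact huniq s ⟨hsτ, by simpa [Subgroup.mem_subgroupOf] using hs⟩
  rw [← hcompl.card_mul_card, Nat.card_preimage_of_injective Subtype.val_injective (by simpa),
    SetLike.coe_sort_coe, Nat.card_congr (Subgroup.subgroupOfEquivOfLe hHK).toEquiv]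

theorem eq_and_eq_of_mul_inv_mul_mem {H K : Subgroup G} {A τ : Set G} (hHK : H ≤ K)
    (hA : ∀ g : G, ∃! r, r ∈ A ∧ r⁻¹ * g ∈ K)
    (hτK : τ ⊆ K) (hτ : ∀ k ∈ K, ∃! t, t ∈ τ ∧ t⁻¹ * k ∈ H)
    {r r' t t' : G} (hr : r ∈ A) (hr' : r' ∈ A) (ht : t ∈ τ) (ht' : t' ∈ τ)
    (hmem : (r' * t')⁻¹ * (r * t) ∈ H) : r' = r ∧ t' = t := by
  have hrr : r' = r := by
    refine (hA r).unique ⟨hr', ?_⟩ ⟨hr, by simp⟩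
    have : r'⁻¹ * r = t' * ((r' * t')⁻¹ * (r * t)) * t⁻¹ := by group
    rw [this]
    exact K.mul_mem (K.mul_mem (hτK ht') (hHK hmem)) (K.inv_mem (hτK ht))
  subst hrr
  refine ⟨rfl, (hτ t (hτK ht)).unique ⟨ht', ?_⟩ ⟨ht, by simp⟩⟩
  simpa [mul_assoc] using hmem

end Transversal

theorem linearIndependent_of_coeff_eq_ite {k M ι : Type*} [Field k] [DecidableEq ι]
    {v : ι → MonoidAlgebra k M} (p : ι → M) {c : k} (hc : c ≠ 0)
    (hv : ∀ i j, (v j).coeff (p i) = if j = i then c else 0) :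
    LinearIndependent k v := by
  rw [linearIndependent_iff']
  intro s a hsum i hi
  have hcoeff := congrArg (fun x => x.coeff (p i)) hsum
  simp only [coeff_sum, Finset.sum_apply', coeff_smul_apply, hv, smul_eq_mul, mul_ite, mul_zero,
    Finset.sum_ite_eq', if_pos hi, coeff_zero, Finsupp.coe_zero, Pi.zero_apply] at hcoeff
  exact (mul_eq_zero.1 hcoeff).resolve_right hc

section GroupAlgebra

variable {F : Type*} [Field F] {G : Type*} [Group G] [Fintype G]

theorem natCast_card_subgroup_ne_zero {S : Subgroup G} (hchar : (Fintype.card G : F) ≠ 0) :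
    (Nat.card S : F) ≠ 0 := by
  intro h
  apply hchar
  rw [← Nat.card_eq_fintype_card]
  exact zero_dvd_iff.1 (h ▸ Nat.cast_dvd_cast S.card_subgroup_dvd_card)

theorem hat_coeff (S : Subgroup G) (y : G) :
    (hat F S).coeff y = if y ∈ S then (Nat.card S : F)⁻¹ else 0 := by
  simp [hat, ← Finset.sum_filter, coeff_sum, Finsupp.single_apply]

theorem of_mul_hat_coeff (S : Subgroup G) (x y : G) :
    (of F G x * hat F S).coeff y = if x⁻¹ * y ∈ S then (Nat.card S : F)⁻¹ else 0 := by
  simp [hat_coeff]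

theorem of_mul_hat_of_inv_mul_mem {S : Subgroup G} {x y : G} (h : x⁻¹ * y ∈ S) :
    of F G x * hat F S = of F G y * hat F S := by
  ext z
  simp only [of_mul_hat_coeff]
  congr 1
  rw [← S.mul_mem_cancel_left (S.inv_mem h)]
  group

theorem of_mul_hat_of_mem {S : Subgroup G} {x : G} (hx : x ∈ S) :
    of F G x * hat F S = hat F S := by
  rw [of_mul_hat_of_inv_mul_mem (y := 1) (by simpa using hx), map_one, one_mul]

theorem of_mul_one_sub_of_mul_hat_coeff (S : Subgroup G) (r t y : G) :
    (of F G r * (1 - of F G t) * hat F S).coeff y =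
      (if r⁻¹ * y ∈ S then (Nat.card S : F)⁻¹ else 0) -
        (if (r * t)⁻¹ * y ∈ S then (Nat.card S : F)⁻¹ else 0) := by
  rw [mul_sub, mul_one, sub_mul, ← map_mul, coeff_sub, Finsupp.sub_apply, of_mul_hat_coeff,
    of_mul_hat_coeff]

noncomputable def transversalFamily (F : Type*) [Field F] {G : Type*} [Group G] [Fintype G]
    (H : Subgroup G) (A τ : Set G) (p : A × ↥(τ \ {1} : Set G)) : MonoidAlgebra F G :=
  of F G p.1 * (1 - of F G p.2) * hat F H

theorem transversalFamily_coeff {H K : Subgroup G} {A τ : Set G} (hHK : H ≤ K)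
    (hA : ∀ g : G, ∃! r, r ∈ A ∧ r⁻¹ * g ∈ K)
    (hτK : τ ⊆ K) (hτ1 : (1 : G) ∈ τ) (hτ : ∀ k ∈ K, ∃! t, t ∈ τ ∧ t⁻¹ * k ∈ H)
    (i j : A × ↥(τ \ {1} : Set G)) :
    (transversalFamily F H A τ j).coeff (i.1 * i.2) =
      if j = i then -(Nat.card H : F)⁻¹ else 0 := by
  obtain ⟨⟨r, hr⟩, ⟨t, ht, ht1⟩⟩ := i
  obtain ⟨⟨r', hr'⟩, ⟨t', ht', -⟩⟩ := j
  have hfirst : r'⁻¹ * (r * t) ∉ H := fun hmem =>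
    ht1 (eq_and_eq_of_mul_inv_mul_mem hHK hA hτK hτ hr hr' ht hτ1 (by simpa using hmem)).2.symm
  have hsecond : (r' * t')⁻¹ * (r * t) ∈ H ↔ r' = r ∧ t' = t := by
    refine ⟨eq_and_eq_of_mul_inv_mul_mem hHK hA hτK hτ hr hr' ht ht', ?_⟩
    rintro ⟨rfl, rfl⟩
    simp
  simp only [transversalFamily, of_mul_one_sub_of_mul_hat_coeff, if_neg hfirst, hsecond,
    Prod.ext_iff, Subtype.ext_iff]
  split_ifs <;> simp

theorem linearIndependent_transversalFamily {H K : Subgroup G} {A τ : Set G}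
    (hH : (Nat.card H : F) ≠ 0) (hHK : H ≤ K) (hA : ∀ g : G, ∃! r, r ∈ A ∧ r⁻¹ * g ∈ K)
    (hτK : τ ⊆ K) (hτ1 : (1 : G) ∈ τ) (hτ : ∀ k ∈ K, ∃! t, t ∈ τ ∧ t⁻¹ * k ∈ H) :
    LinearIndependent F (transversalFamily F H A τ) :=
  linearIndependent_of_coeff_eq_ite (fun i => i.1 * i.2) (neg_ne_zero.2 (inv_ne_zero hH))
    (transversalFamily_coeff hHK hA hτK hτ1 hτ)

theorem one_sub_of_mul_hat_sub_hat {H K : Subgroup G} {t : G} (ht : t ∈ K) :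
    (1 - of F G t) * (hat F H - hat F K) = (1 - of F G t) * hat F H := by
  rw [mul_sub (1 - of F G t), sub_mul 1 (of F G t) (hat F K), one_mul, of_mul_hat_of_mem ht,
    sub_self, sub_zero]

theorem of_mul_hat_sub_hat_of_mem {H K : Subgroup G} (hHK : H ≤ K) {h : G} (hh : h ∈ H) :
    of F G h * (hat F H - hat F K) = hat F H - hat F K := by
  rw [mul_sub, of_mul_hat_of_mem hh, of_mul_hat_of_mem (hHK hh)]

theorem sum_of_mul_hat_eq_card_smul_hat {H K : Subgroup G} {τ : Set G}
    (hK : (Nat.card K : F) ≠ 0) (hHK : H ≤ K)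
    (hτK : τ ⊆ K) (hτ : ∀ k ∈ K, ∃! t, t ∈ τ ∧ t⁻¹ * k ∈ H) :
    ∑ s : τ, of F G s * hat F H = (Nat.card τ : F) • hat F K := by
  have hcard : (Nat.card τ : F) * Nat.card H = Nat.card K := by
    rw [← Nat.cast_mul, card_mul_card_eq_card_of_existsUnique hHK hτK hτ]
  have hH : (Nat.card H : F) ≠ 0 := right_ne_zero_of_mul (hcard ▸ hK)
  ext y
  simp only [coeff_sum, Finset.sum_apply', of_mul_hat_coeff, coeff_smul_apply, hat_coeff,
    smul_eq_mul]
  by_cases hy : y ∈ K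
  · obtain ⟨t, ⟨htτ, htH⟩, huniq⟩ := hτ y hy
    rw [Finset.sum_eq_single_of_mem ⟨t, htτ⟩ (Finset.mem_univ _), if_pos htH, if_pos hy]
    · field_simp
      rw [← hcard, mul_comm]
    · rintro ⟨s, hs⟩ - hst
      rw [if_neg fun hsH => hst (Subtype.ext (huniq s ⟨hs, hsH⟩))]
  · rw [if_neg hy, mul_zero, Finset.sum_eq_zero]
    rintro ⟨s, hs⟩ -
    rw [if_neg fun hsH => hy (by simpa using K.mul_mem (hτK hs) (hHK hsH))]

theorem hat_sub_hat_eq_smul_sum {H K : Subgroup G} {τ : Set G}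
    (hK : (Nat.card K : F) ≠ 0) (hHK : H ≤ K)
    (hτK : τ ⊆ K) (hτ : ∀ k ∈ K, ∃! t, t ∈ τ ∧ t⁻¹ * k ∈ H) :
    hat F H - hat F K = (Nat.card τ : F)⁻¹ • ∑ s : τ, (1 - of F G s) * hat F H := by
  have hτ0 : (Nat.card τ : F) ≠ 0 := by
    refine left_ne_zero_of_mul (b := (Nat.card H : F)) ?_
    rwa [← Nat.cast_mul, card_mul_card_eq_card_of_existsUnique hHK hτK hτ]
  simp only [sub_mul, one_mul, Finset.sum_sub_distrib, Finset.sum_const, Finset.card_univ,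
    sum_of_mul_hat_eq_card_smul_hat hK hHK hτK hτ, ← Nat.card_eq_fintype_card,
    ← Nat.cast_smul_eq_nsmul F, smul_sub, inv_smul_smul₀ hτ0]

theorem of_mul_one_sub_of_mul_hat_mem_span {H : Subgroup G} {A τ : Set G} {r t : G}
    (hr : r ∈ A) (ht : t ∈ τ) :
    of F G r * (1 - of F G t) * hat F H ∈
      Submodule.span F (Set.range (transversalFamily F H A τ)) := by
  by_cases ht1 : t = 1
  · rw [ht1, map_one, sub_self, mul_zero, zero_mul]
    exact zero_mem _
  · exact Submodule.subset_span ⟨(⟨r, hr⟩, ⟨t, ht, ht1⟩), rfl⟩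

theorem of_mul_hat_sub_hat_mem_span {H K : Subgroup G} {A τ : Set G}
    (hK : (Nat.card K : F) ≠ 0) (hHK : H ≤ K) (hA : ∀ g : G, ∃! r, r ∈ A ∧ r⁻¹ * g ∈ K)
    (hτK : τ ⊆ K) (hτ : ∀ k ∈ K, ∃! t, t ∈ τ ∧ t⁻¹ * k ∈ H) (g : G) :
    of F G g * (hat F H - hat F K) ∈
      Submodule.span F (Set.range (transversalFamily F H A τ)) := by
  set M := Submodule.span F (Set.range (transversalFamily F H A τ))
  obtain ⟨r, ⟨hr, hrg⟩, -⟩ := hA g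
  obtain ⟨t, ⟨ht, htg⟩, -⟩ := hτ _ hrg
  have hrep : of F G r * (hat F H - hat F K) ∈ M := by
    rw [hat_sub_hat_eq_smul_sum hK hHK hτK hτ, mul_smul_comm, Finset.mul_sum]
    exact M.smul_mem _ <| M.sum_mem fun s _ => by
      rw [← mul_assoc]; exact of_mul_one_sub_of_mul_hat_mem_span hr s.2
  obtain ⟨h, hh, rfl⟩ : ∃ h ∈ H, r * t * h = g := ⟨t⁻¹ * (r⁻¹ * g), htg, by group⟩
  have hdecomp : of F G (r * t * h) * (hat F H - hat F K) =
      of F G r * (hat F H - hat F K) - of F G r * (1 - of F G t) * hat F H := by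
    rw [map_mul, mul_assoc, of_mul_hat_sub_hat_of_mem hHK hh, mul_assoc,
      ← one_sub_of_mul_hat_sub_hat (hτK ht), map_mul]
    noncomm_ring
  rw [hdecomp]
  exact M.sub_mem hrep (of_mul_one_sub_of_mul_hat_mem_span hr ht)

theorem span_transversalFamily {H K : Subgroup G} {A τ : Set G}
    (hK : (Nat.card K : F) ≠ 0) (hHK : H ≤ K) (hA : ∀ g : G, ∃! r, r ∈ A ∧ r⁻¹ * g ∈ K)
    (hτK : τ ⊆ K) (hτ : ∀ k ∈ K, ∃! t, t ∈ τ ∧ t⁻¹ * k ∈ H) :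
    Submodule.span F (Set.range (transversalFamily F H A τ)) =
      (Ideal.span {hat F H - hat F K}).restrictScalars F := by
  apply le_antisymm
  · rw [Submodule.span_le]
    rintro _ ⟨⟨r, t, ht, -⟩, rfl⟩
    refine Ideal.mem_span_singleton'.2 ⟨of F G r * (1 - of F G t), ?_⟩
    rw [mul_assoc, one_sub_of_mul_hat_sub_hat (hτK ht), ← mul_assoc]
    rfl
  · intro x hx
    obtain ⟨a, rfl⟩ := Ideal.mem_span_singleton'.1 hx
    clear hx
    induction a using MonoidAlgebra.induction_on with
    | of g => exact of_mul_hat_sub_hat_mem_span hK hHK hA hτK hτ g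
    | add a b ha hb => rw [add_mul]; exact Submodule.add_mem _ ha hb
    | smul c a ha => rw [smul_mul_assoc]; exact Submodule.smul_mem _ c ha

end GroupAlgebra

theorem stmt3 {F : Type*} [Field F] {G : Type*} [Group G] [Fintype G]
    (hchar : (Fintype.card G : F) ≠ 0)
    (H K : Subgroup G) (hHK : H ≤ K)
    (A τ : Set G)
    -- `A` is a (left) transversal of `K` in `G`
    (hA : ∀ g : G, ∃! r, r ∈ A ∧ r⁻¹ * g ∈ K)
    -- `τ` is a (left) transversal of `H` in `K` contained in `K` and containing `1`
    (hτK : τ ⊆ (K : Set G)) (hτ1 : (1 : G) ∈ τ)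
    (hτ : ∀ k ∈ K, ∃! t, t ∈ τ ∧ t⁻¹ * k ∈ H) :
    LinearIndependent F
        (fun p : A × ↥(τ \ {1} : Set G) =>
          MonoidAlgebra.of F G (p.1 : G) *
            (1 - MonoidAlgebra.of F G (p.2 : G)) * hat F H) ∧
      Submodule.span F
          (Set.range (fun p : A × ↥(τ \ {1} : Set G) =>
            MonoidAlgebra.of F G (p.1 : G) *
              (1 - MonoidAlgebra.of F G (p.2 : G)) * hat F H)) =
        Submodule.restrictScalars F (Ideal.span {hat F H - hat F K}) := by
  have hH : (Nat.card H : F) ≠ 0 := natCast_card_subgroup_ne_zero hchar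
  have hK : (Nat.card K : F) ≠ 0 := natCast_card_subgroup_ne_zero hchar
  exact ⟨linearIndependent_transversalFamily hH hHK hA hτK hτ1 hτ,
    span_transversalFamily hK hHK hA hτK hτ⟩
end

section
/- Let D be the dihedral group of order 2p^m, F a field with char(F) ∤ 2p^m, H_j = ⟨a^{p^j}⟩, e_j = Ĥ_j − Ĥ_{j−1} for 1 ≤ j ≤ m, and set H*_j = ⟨b⟩·H_j (the subgroup generated by b and a^{p^j}). Then the idempotent e₁₁ := ((1+b)/2)·e_j satisfies e₁₁ = Ĥ*_j − Ĥ*_{j−1}, and the left ideal (FD)e₁₁ has F-dimension φ(p^j) = p^{j−1}(p−1) and minimum Hamming weight 4p^{m−j}. -/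
open scoped Classical

/-- Hamming weight: the number of nonzero coefficients. -/
noncomputable def wt {F : Type*} [Field F] {G : Type*} [Group G]
    (α : MonoidAlgebra F G) : ℕ :=
  α.coeff.support.card

/-!
Write `K_d = p^d ℤ/p^mℤ` and `H*_d = {aⁱ, baⁱ : i ∈ K_d}`. Since `H*_d = H_d ⊔ b H_d`,
`((1 + b)/2) Ĥ_d = Ĥ*_d`, which gives `e₁₁ = Ĥ*_j - Ĥ*_{j-1}`. The rotations `a^(t p^(j-1))`,
`t < p`, form a left and right transversal of `H*_j` in `H*_{j-1}`, so their sum `N` satisfies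
`N e₁₁ = e₁₁ N = 0`, while `x e₁₁ = e₁₁ x = e₁₁` for `x ∈ H*_j`.

Dimension: `FD e₁₁` is spanned by the `aᵏ e₁₁` with `k < p^j`, and `N e₁₁ = 0` expresses those with
`k ≥ p^(j-1) (p-1)` through the others; the remaining `φ(p^j)` are independent, as their
coefficients at the rotations show.

Weight: every `α ∈ FD e₁₁` has `α b = α`, `α x = α` for `x ∈ H*_j` and `α N = 0`. So the
coefficients of `α` on the reflections mirror those on the rotations, those on the rotations are
constant on the cosets of `K_j`, and they sum to zero over `p` distinct such cosets. A nonzero `α`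
is therefore supported on at least two cosets of `K_j`, of size `p^(m-j)` each, among the rotations,
and has weight at least `4 p^(m-j)`; `e₁₁ - a^(p^(j-1)) e₁₁` attains this.
-/

open Finset DihedralGroup MonoidAlgebra

theorem ZMod.intCast_mem_zmultiples_natCast_iff {n c : ℕ} (hc : c ∣ n) (k : ℤ) :
    (k : ZMod n) ∈ AddSubgroup.zmultiples (c : ZMod n) ↔ (c : ℤ) ∣ k := by
  rw [AddSubgroup.mem_zmultiples_iff]
  constructor
  · rintro ⟨t, ht⟩
    rw [zsmul_eq_mul, ← Int.cast_natCast, ← Int.cast_mul,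
      ZMod.intCast_eq_intCast_iff_dvd_sub] at ht
    exact (dvd_sub_left (dvd_mul_left _ _)).mp ((Int.natCast_dvd_natCast.mpr hc).trans ht)
  · rintro ⟨t, rfl⟩
    exact ⟨t, by push_cast; ring⟩

theorem card_filter_range_dvd_sub_mul {c q : ℕ} [NeZero q] (hc : c ≠ 0) (V : ℤ) :
    ((range q).filter fun t : ℕ => (c * q : ℤ) ∣ V - c * t).card =
      if (c : ℤ) ∣ V then 1 else 0 := by
  split_ifs with hV
  · obtain ⟨W, rfl⟩ := hV
    rw [Finset.card_eq_one]
    refine ⟨(W : ZMod q).val, Finset.ext fun t => ?_⟩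
    rw [mem_filter, mem_range, mem_singleton, ← mul_sub,
      mul_dvd_mul_iff_left (by exact_mod_cast hc), ← ZMod.intCast_eq_intCast_iff_dvd_sub]
    constructor
    · rintro ⟨ht, hW⟩
      rw [← hW, Int.cast_natCast, ZMod.val_cast_of_lt ht]
    · rintro rfl
      exact ⟨ZMod.val_lt _, by simp⟩
  · refine Finset.card_eq_zero.mpr (filter_false_of_mem fun t _ h => hV ?_)
    exact (dvd_sub_left (dvd_mul_right _ _)).mp ((dvd_mul_right _ _).trans h)

section Cosets

variable {Z : Type*} [AddCommGroup Z] [Fintype Z]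

theorem AddSubgroup.card_filter_sub_mem (A : AddSubgroup Z) (v : Z) :
    #{i | i - v ∈ A} = Nat.card A := by
  rw [Nat.card_eq_fintype_card, Fintype.card_subtype, card_filter, card_filter]
  exact (Equiv.subRight v).sum_comp fun i => if i ∈ A then 1 else 0

theorem AddSubgroup.card_filter_sub_mem_or_sub_mem (A : AddSubgroup Z) {v w : Z}
    (h : w - v ∉ A) : #{i | i - v ∈ A ∨ i - w ∈ A} = 2 * Nat.card A := by
  rw [filter_or, card_union_of_disjoint, card_filter_sub_mem, card_filter_sub_mem, two_mul]
  exact disjoint_filter.mpr fun i _ hv hw => h (by simpa using A.sub_mem hv hw)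

theorem AddSubgroup.two_mul_natCard_le_card_filter_ne_zero {M : Type*} [Zero M]
    (A : AddSubgroup Z) {f : Z → M} (hf : ∀ i v, i - v ∈ A → f i = f v) {v w : Z}
    (hv : f v ≠ 0) (hw : f w ≠ 0) (h : w - v ∉ A) : 2 * Nat.card A ≤ #{i | f i ≠ 0} := by
  rw [← A.card_filter_sub_mem_or_sub_mem h]
  refine card_le_card fun i => ?_
  simp only [mem_filter, mem_univ, true_and]
  rintro (hi | hi)
  exacts [hf i v hi ▸ hv, hf i w hi ▸ hw]

end Cosets

section GroupAlgebra

variable {F : Type*} [Field F] {G : Type*} [Group G]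

theorem MonoidAlgebra.coeff_of_mul (g : G) (β : MonoidAlgebra F G) (x : G) :
    (of F G g * β).coeff x = β.coeff (g⁻¹ * x) := by
  rw [of_apply, coeff_single_mul_apply, one_mul]

theorem MonoidAlgebra.coeff_mul_of (g : G) (β : MonoidAlgebra F G) (x : G) :
    (β * of F G g).coeff x = β.coeff (x * g⁻¹) := by
  rw [of_apply, coeff_mul_single_apply, mul_one]

variable [Fintype G]

theorem wt_eq_card_filter (α : MonoidAlgebra F G) :
    wt α = #{x | α.coeff x ≠ 0} := by
  rw [wt]
  congr 1
  ext x
  simp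

theorem coeff_hat (S : Subgroup G) (x : G) :
    (hat F S).coeff x = if x ∈ S then (Nat.card S : F)⁻¹ else 0 := by
  simp only [hat, coeff_smul_apply, coeff_sum, Finsupp.finsetSum_apply, smul_eq_mul]
  rw [Finset.sum_eq_single x (fun g _ hg => by split_ifs <;> simp [of_apply, hg])
    (by simp)]
  split_ifs <;> simp [of_apply]

theorem of_mul_hat {S : Subgroup G} {g : G} (hg : g ∈ S) : of F G g * hat F S = hat F S := by
  ext x
  rw [coeff_of_mul, coeff_hat, coeff_hat, S.mul_mem_cancel_left (S.inv_mem hg)]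

theorem hat_mul_of {S : Subgroup G} {g : G} (hg : g ∈ S) : hat F S * of F G g = hat F S := by
  ext x
  rw [coeff_mul_of, coeff_hat, coeff_hat, S.mul_mem_cancel_right (S.inv_mem hg)]

end GroupAlgebra

namespace DihedralGroup

variable {F : Type*} [Field F] {n : ℕ}

def zmodPart : DihedralGroup n → ZMod n
  | r i => i
  | sr i => i

@[simp] theorem zmodPart_r (i : ZMod n) : zmodPart (r i) = i := rfl
@[simp] theorem zmodPart_sr (i : ZMod n) : zmodPart (sr i) = i := rfl

theorem zmodPart_mul_r (x : DihedralGroup n) (k : ZMod n) :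
    zmodPart (x * r k) = zmodPart x + k := by
  cases x <;> simp [r_mul_r, sr_mul_r]

def dihedralSubgroup (A : AddSubgroup (ZMod n)) : Subgroup (DihedralGroup n) where
  carrier := {x | zmodPart x ∈ A}
  mul_mem' := by
    rintro (i | i) (k | k) hi hk <;>
      simp only [r_mul_r, r_mul_sr, sr_mul_r, sr_mul_sr] at hi hk ⊢
    exacts [A.add_mem hi hk, A.sub_mem hk hi, A.add_mem hi hk, A.sub_mem hk hi]
  one_mem' := A.zero_mem
  inv_mem' := by
    rintro (i | i) hi
    exacts [A.neg_mem hi, hi]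

theorem mem_dihedralSubgroup {A : AddSubgroup (ZMod n)} {x : DihedralGroup n} :
    x ∈ dihedralSubgroup A ↔ zmodPart x ∈ A := Iff.rfl

theorem dihedralSubgroup_mono {A B : AddSubgroup (ZMod n)} (h : A ≤ B) :
    dihedralSubgroup A ≤ dihedralSubgroup B := fun _ hx => h hx

theorem r_mem_zpowers_r_iff (c i : ZMod n) :
    r i ∈ Subgroup.zpowers (r c) ↔ i ∈ AddSubgroup.zmultiples c := by
  simp only [Subgroup.mem_zpowers_iff, AddSubgroup.mem_zmultiples_iff, r_zpow, r.injEq,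
    zsmul_eq_mul, mul_comm]

theorem sr_notMem_zpowers_r (c i : ZMod n) : sr i ∉ Subgroup.zpowers (r c) := by
  simp [Subgroup.mem_zpowers_iff, r_zpow]

theorem closure_sr_zero_r (c : ZMod n) :
    Subgroup.closure {sr 0, r c} = dihedralSubgroup (AddSubgroup.zmultiples c) := by
  refine le_antisymm ((Subgroup.closure_le _).mpr ?_) fun x hx => ?_
  · rintro x (rfl | rfl)
    exacts [(AddSubgroup.zmultiples c).zero_mem, AddSubgroup.mem_zmultiples c]
  · have hr : ∀ i ∈ AddSubgroup.zmultiples c, r i ∈ Subgroup.closure {sr 0, r c} := by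
      intro i hi
      exact Subgroup.zpowers_le_of_mem (Subgroup.subset_closure (by simp))
        ((r_mem_zpowers_r_iff c i).mpr hi)
    cases x with
    | r i => exact hr i hx
    | sr i =>
      rw [← zero_add i, ← sr_mul_r]
      exact Subgroup.mul_mem _ (Subgroup.subset_closure (by simp)) (hr i hx)

theorem coeff_sr_of_mul_sr_zero {α : MonoidAlgebra F (DihedralGroup n)}
    (h : α * of F _ (sr 0) = α) (i : ZMod n) : α.coeff (sr i) = α.coeff (r (-i)) := by
  conv_lhs => rw [← h, coeff_mul_of, inv_sr, sr_mul_sr, zero_sub]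

variable [NeZero n]

theorem card_filter_eq_add (P : DihedralGroup n → Prop) [DecidablePred P] :
    #{x | P x} = #{i | P (r i)} + #{i | P (sr i)} := by
  simp only [Finset.card_filter]
  exact (Fintype.sum_equiv equivSum _ (fun s => if P (equivSum.symm s) then 1 else 0)
    fun x => by cases x <;> rfl).trans (Fintype.sum_sum_type _)

theorem natCard_subgroup (S : Subgroup (DihedralGroup n)) :
    Nat.card S = #{i | r i ∈ S} + #{i | sr i ∈ S} := by
  rw [Nat.card_eq_fintype_card, Fintype.card_subtype, card_filter_eq_add]

theorem natCard_dihedralSubgroup (A : AddSubgroup (ZMod n)) :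
    Nat.card (dihedralSubgroup A) = 2 * Nat.card A := by
  rw [natCard_subgroup, Nat.card_eq_fintype_card, Fintype.card_subtype]
  simp only [mem_dihedralSubgroup, zmodPart_r, zmodPart_sr]
  ring

theorem natCard_zpowers_r (c : ZMod n) :
    Nat.card (Subgroup.zpowers (r c)) = Nat.card (AddSubgroup.zmultiples c) := by
  rw [natCard_subgroup, Nat.card_eq_fintype_card, Fintype.card_subtype]
  simp [r_mem_zpowers_r_iff, sr_notMem_zpowers_r]

theorem coeff_hat_dihedralSubgroup (A : AddSubgroup (ZMod n)) (x : DihedralGroup n) :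
    (hat F (dihedralSubgroup A)).coeff x =
      if zmodPart x ∈ A then ((2 * Nat.card A : ℕ) : F)⁻¹ else 0 := by
  rw [coeff_hat, natCard_dihedralSubgroup, mem_dihedralSubgroup]

theorem half_one_add_sr_zero_mul_hat_zpowers (c : ZMod n) :
    ((2 : F)⁻¹ • (1 + of F _ (sr 0))) * hat F (Subgroup.zpowers (r c)) =
      hat F (dihedralSubgroup (AddSubgroup.zmultiples c)) := by
  ext x
  rw [smul_mul_assoc, add_mul, one_mul, coeff_smul_apply, coeff_add, Finsupp.add_apply,
    coeff_of_mul, coeff_hat, coeff_hat, coeff_hat_dihedralSubgroup, natCard_zpowers_r,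
    smul_eq_mul]
  cases x <;>
    simp [r_mem_zpowers_r_iff, sr_notMem_zpowers_r, sr_mul_r, sr_mul_sr, mul_comm]

theorem wt_eq_card_add_card (α : MonoidAlgebra F (DihedralGroup n)) :
    wt α = #{i | α.coeff (r i) ≠ 0} + #{i | α.coeff (sr i) ≠ 0} := by
  rw [wt_eq_card_filter, card_filter_eq_add]

theorem wt_eq_two_mul_of_mul_sr_zero {α : MonoidAlgebra F (DihedralGroup n)}
    (h : α * of F _ (sr 0) = α) : wt α = 2 * #{i | α.coeff (r i) ≠ 0} := by
  rw [wt_eq_card_add_card, two_mul]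
  simp only [coeff_sr_of_mul_sr_zero h, Finset.card_filter]
  congr 1
  exact Equiv.sum_comp (Equiv.neg (ZMod n)) fun i => if α.coeff (r i) ≠ 0 then 1 else 0

end DihedralGroup

section PrimePower

variable {p m : ℕ}

/-- `dihedralSubgroup (ppowMultiples p m d)` is the subgroup `H*_d = ⟨b, a ^ p ^ d⟩`. -/
def ppowMultiples (p m d : ℕ) : AddSubgroup (ZMod (p ^ m)) :=
  AddSubgroup.zmultiples ((p ^ d : ℕ) : ZMod (p ^ m))

theorem intCast_mem_ppowMultiples_iff {d : ℕ} (hd : d ≤ m) (k : ℤ) :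
    (k : ZMod (p ^ m)) ∈ ppowMultiples p m d ↔ (p : ℤ) ^ d ∣ k := by
  rw [ppowMultiples, ZMod.intCast_mem_zmultiples_natCast_iff (pow_dvd_pow p hd)]
  push_cast
  rfl

theorem ppowMultiples_antitone : Antitone (ppowMultiples p m) := by
  intro d' d h
  refine AddSubgroup.zmultiples_le_of_mem ⟨p ^ (d - d'), ?_⟩
  dsimp only
  rw [zsmul_eq_mul, ← Nat.cast_pow, Int.cast_natCast, ← Nat.cast_mul, ← pow_add,
    Nat.sub_add_cancel h]

theorem natCast_ppow_mul_mem_ppowMultiples (d t : ℕ) :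
    ((p ^ d * t : ℕ) : ZMod (p ^ m)) ∈ ppowMultiples p m d := by
  rw [Nat.cast_mul, ← nsmul_eq_mul']
  exact AddSubgroup.nsmul_mem _ (AddSubgroup.mem_zmultiples _) t

theorem natCast_sub_mem_ppowMultiples_iff {d : ℕ} (hd : d ≤ m) (k i : ℕ) :
    (k : ZMod (p ^ m)) - i ∈ ppowMultiples p m d ↔ i ≡ k [MOD p ^ d] := by
  rw [← Int.cast_natCast k, ← Int.cast_natCast i, ← Int.cast_sub,
    intCast_mem_ppowMultiples_iff hd, Nat.modEq_iff_dvd]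
  push_cast
  rfl

theorem DihedralGroup.r_natCast_ppow_mul_mem (d t : ℕ) :
    r ((p ^ d * t : ℕ) : ZMod (p ^ m)) ∈ dihedralSubgroup (ppowMultiples p m d) :=
  natCast_ppow_mul_mem_ppowMultiples d t

theorem natCard_ppowMultiples (hp : p.Prime) {d : ℕ} (hd : d ≤ m) :
    Nat.card (ppowMultiples p m d) = p ^ (m - d) := by
  rw [ppowMultiples, Nat.card_zmultiples, ZMod.addOrderOf_coe _ (pow_pos hp.pos m).ne',
    Nat.gcd_eq_right (pow_dvd_pow p hd), Nat.pow_div hd hp.pos]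

theorem natCast_ppow_pred_mul_notMem (hp : p.Prime) {j : ℕ} (hj : 1 ≤ j) (hjm : j ≤ m)
    {t : ℕ} (ht₀ : 0 < t) (htp : t < p) :
    ((p ^ (j - 1) * t : ℕ) : ZMod (p ^ m)) ∉ ppowMultiples p m j := by
  rw [← Int.cast_natCast, intCast_mem_ppowMultiples_iff hjm, ← Nat.sub_add_cancel hj, pow_succ]
  push_cast
  rw [mul_dvd_mul_iff_left (pow_ne_zero _ (by exact_mod_cast hp.ne_zero))]
  exact fun h => (Nat.not_dvd_of_pos_of_lt ht₀ htp) (by exact_mod_cast h)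

theorem card_filter_range_sub_mem_ppowMultiples (hp : p.Prime) {j : ℕ} (hj : 1 ≤ j)
    (hjm : j ≤ m) (i : ZMod (p ^ m)) :
    ((range p).filter fun t => i - ((p ^ (j - 1) * t : ℕ) : ZMod (p ^ m)) ∈
      ppowMultiples p m j).card = if i ∈ ppowMultiples p m (j - 1) then 1 else 0 := by
  set V : ℤ := i.cast
  have hV : i = (V : ZMod (p ^ m)) := (ZMod.intCast_zmod_cast i).symm
  have key : ∀ t : ℕ, i - ((p ^ (j - 1) * t : ℕ) : ZMod (p ^ m)) ∈ ppowMultiples p m j ↔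
      ((p ^ (j - 1) : ℕ) : ℤ) * (p : ℤ) ∣ V - ((p ^ (j - 1) : ℕ) : ℤ) * (t : ℤ) := by
    intro t
    rw [hV, ← Int.cast_natCast, ← Int.cast_sub, intCast_mem_ppowMultiples_iff hjm]
    push_cast
    rw [← pow_succ, Nat.sub_add_cancel hj]
  have : NeZero p := ⟨hp.ne_zero⟩
  rw [filter_congr fun t _ => key t, card_filter_range_dvd_sub_mul (pow_ne_zero _ hp.ne_zero),
    hV, intCast_mem_ppowMultiples_iff (hjm.trans' (Nat.sub_le j 1))]
  push_cast
  congr 1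

variable {F : Type*} [Field F] {j : ℕ}

theorem sum_range_ite_sub_mem_ppowMultiples (hp : p.Prime) (hj : 1 ≤ j) (hjm : j ≤ m)
    (i : ZMod (p ^ m)) (u : F) :
    ∑ t ∈ range p, (if i - ((p ^ (j - 1) * t : ℕ) : ZMod (p ^ m)) ∈ ppowMultiples p m j
      then u else 0) = if i ∈ ppowMultiples p m (j - 1) then u else 0 := by
  rw [sum_ite, sum_const_zero, add_zero, sum_const,
    card_filter_range_sub_mem_ppowMultiples hp hj hjm]
  split_ifs <;> simp

theorem inv_two_mul_ppow_eq_mul (hj : 1 ≤ j) (hjm : j ≤ m) (hpF : (p : F) ≠ 0) :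
    ((2 * p ^ (m - j) : ℕ) : F)⁻¹ = (p : F) * ((2 * p ^ (m - (j - 1)) : ℕ) : F)⁻¹ := by
  rw [show m - (j - 1) = m - j + 1 by omega]
  push_cast
  rw [pow_succ, ← mul_assoc, mul_inv (2 * _ : F) (p : F), mul_left_comm, mul_inv_cancel₀ hpF,
    mul_one]

end PrimePower

namespace DihedralGroup

section Idempotent

variable (F : Type*) [Field F] (p m j : ℕ) [NeZero (p ^ m)]

noncomputable def e₁₁ : MonoidAlgebra F (DihedralGroup (p ^ m)) :=
  hat F (dihedralSubgroup (ppowMultiples p m j)) -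
    hat F (dihedralSubgroup (ppowMultiples p m (j - 1)))

/-- The rotations `r (p ^ (j - 1) * t)`, `t < p`, form a left and a right transversal of
`dihedralSubgroup (ppowMultiples p m j)` in `dihedralSubgroup (ppowMultiples p m (j - 1))`. -/
noncomputable def transversalSum : MonoidAlgebra F (DihedralGroup (p ^ m)) :=
  ∑ t ∈ range p, of F _ (r ((p ^ (j - 1) * t : ℕ) : ZMod (p ^ m)))

variable {F p m j}

theorem coeff_hat_dihedralSubgroup_ppowMultiples (hp : p.Prime) {d : ℕ} (hd : d ≤ m)
    (x : DihedralGroup (p ^ m)) :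
    (hat F (dihedralSubgroup (ppowMultiples p m d))).coeff x =
      if zmodPart x ∈ ppowMultiples p m d then ((2 * p ^ (m - d) : ℕ) : F)⁻¹ else 0 := by
  rw [coeff_hat_dihedralSubgroup, natCard_ppowMultiples hp hd]

theorem of_mul_e₁₁ {x : DihedralGroup (p ^ m)}
    (hx : x ∈ dihedralSubgroup (ppowMultiples p m j)) :
    of F _ x * e₁₁ F p m j = e₁₁ F p m j := by
  rw [e₁₁, mul_sub, of_mul_hat hx,
    of_mul_hat (dihedralSubgroup_mono (ppowMultiples_antitone (Nat.sub_le j 1)) hx)]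

theorem e₁₁_mul_of {x : DihedralGroup (p ^ m)}
    (hx : x ∈ dihedralSubgroup (ppowMultiples p m j)) :
    e₁₁ F p m j * of F _ x = e₁₁ F p m j := by
  rw [e₁₁, sub_mul, hat_mul_of hx,
    hat_mul_of (dihedralSubgroup_mono (ppowMultiples_antitone (Nat.sub_le j 1)) hx)]

theorem transversalSum_mul_hat (hp : p.Prime) (hj : 1 ≤ j) (hjm : j ≤ m) (hpF : (p : F) ≠ 0) :
    transversalSum F p m j * hat F (dihedralSubgroup (ppowMultiples p m j)) =
      (p : F) • hat F (dihedralSubgroup (ppowMultiples p m (j - 1))) := by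
  ext x
  rw [transversalSum, sum_mul, coeff_sum, Finsupp.finsetSum_apply, coeff_smul_apply, smul_eq_mul,
    coeff_hat_dihedralSubgroup_ppowMultiples hp (hjm.trans' (Nat.sub_le j 1)), mul_ite, mul_zero,
    ← inv_two_mul_ppow_eq_mul hj hjm hpF]
  simp_rw [coeff_of_mul, coeff_hat_dihedralSubgroup_ppowMultiples hp hjm, inv_r]
  cases x with
  | r i =>
    simp_rw [r_mul_r, zmodPart_r, neg_add_eq_sub]
    exact sum_range_ite_sub_mem_ppowMultiples hp hj hjm i _
  | sr i =>
    simp_rw [r_mul_sr, zmodPart_sr, sub_neg_eq_add, ← neg_mem_iff (x := i + _), neg_add',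
      ← neg_mem_iff (x := i)]
    exact sum_range_ite_sub_mem_ppowMultiples hp hj hjm (-i) _

theorem hat_mul_transversalSum (hp : p.Prime) (hj : 1 ≤ j) (hjm : j ≤ m) (hpF : (p : F) ≠ 0) :
    hat F (dihedralSubgroup (ppowMultiples p m j)) * transversalSum F p m j =
      (p : F) • hat F (dihedralSubgroup (ppowMultiples p m (j - 1))) := by
  ext x
  rw [transversalSum, mul_sum, coeff_sum, Finsupp.finsetSum_apply, coeff_smul_apply, smul_eq_mul,
    coeff_hat_dihedralSubgroup_ppowMultiples hp (hjm.trans' (Nat.sub_le j 1)), mul_ite, mul_zero,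
    ← inv_two_mul_ppow_eq_mul hj hjm hpF]
  simp_rw [coeff_mul_of, coeff_hat_dihedralSubgroup_ppowMultiples hp hjm, inv_r, zmodPart_mul_r,
    ← sub_eq_add_neg]
  exact sum_range_ite_sub_mem_ppowMultiples hp hj hjm _ _

theorem transversalSum_mul_e₁₁ (hp : p.Prime) (hj : 1 ≤ j) (hjm : j ≤ m) (hpF : (p : F) ≠ 0) :
    transversalSum F p m j * e₁₁ F p m j = 0 := by
  rw [e₁₁, mul_sub, transversalSum_mul_hat hp hj hjm hpF, transversalSum, sum_mul,
    sum_congr rfl fun t _ => of_mul_hat (r_natCast_ppow_mul_mem _ t), sum_const, card_range,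
    ← Nat.cast_smul_eq_nsmul F, sub_self]

theorem e₁₁_mul_transversalSum (hp : p.Prime) (hj : 1 ≤ j) (hjm : j ≤ m) (hpF : (p : F) ≠ 0) :
    e₁₁ F p m j * transversalSum F p m j = 0 := by
  rw [e₁₁, sub_mul, hat_mul_transversalSum hp hj hjm hpF, transversalSum, mul_sum,
    sum_congr rfl fun t _ => hat_mul_of (r_natCast_ppow_mul_mem _ t), sum_const, card_range,
    ← Nat.cast_smul_eq_nsmul F, sub_self]

end Idempotent

section Dimension

variable {F : Type*} [Field F] {p m j : ℕ} [NeZero (p ^ m)]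

theorem of_sr_mul_e₁₁ (i : ZMod (p ^ m)) :
    of F _ (sr i) * e₁₁ F p m j = of F _ (r (-i)) * e₁₁ F p m j := by
  rw [show sr i = r (-i) * sr 0 by rw [r_mul_sr, zero_sub, neg_neg], map_mul, mul_assoc,
    of_mul_e₁₁ (x := sr 0) (ppowMultiples p m j).zero_mem]

theorem of_r_mul_e₁₁_eq_mod (k : ℕ) :
    of F _ (r (k : ZMod (p ^ m))) * e₁₁ F p m j =
      of F _ (r ((k % p ^ j : ℕ) : ZMod (p ^ m))) * e₁₁ F p m j := by
  conv_lhs => rw [← Nat.mod_add_div k (p ^ j), Nat.cast_add, ← r_mul_r, map_mul, mul_assoc,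
    of_mul_e₁₁ (r_natCast_ppow_mul_mem j _)]

variable (F p m j) in
noncomputable def rotatedE₁₁ (i : Fin (p ^ (j - 1) * (p - 1))) :
    MonoidAlgebra F (DihedralGroup (p ^ m)) :=
  of F _ (r ((i : ℕ) : ZMod (p ^ m))) * e₁₁ F p m j

theorem of_r_mul_e₁₁_mem_span (hp : p.Prime) (hj : 1 ≤ j) (hjm : j ≤ m) (hpF : (p : F) ≠ 0)
    (k : ℕ) :
    of F _ (r (k : ZMod (p ^ m))) * e₁₁ F p m j ∈
      Submodule.span F (Set.range (rotatedE₁₁ F p m j)) := by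
  have hmem : ∀ k < p ^ (j - 1) * (p - 1), of F _ (r (k : ZMod (p ^ m))) * e₁₁ F p m j ∈
      Submodule.span F (Set.range (rotatedE₁₁ F p m j)) :=
    fun k hk => Submodule.subset_span ⟨⟨k, hk⟩, rfl⟩
  have hpj : p ^ j = p ^ (j - 1) * (p - 1) + p ^ (j - 1) := by
    rw [← mul_add_one, Nat.sub_add_cancel hp.one_le, ← pow_succ, Nat.sub_add_cancel hj]
  rw [of_r_mul_e₁₁_eq_mod]
  obtain hlt | hge := lt_or_ge (k % p ^ j) (p ^ (j - 1) * (p - 1))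
  · exact hmem _ hlt
  -- `k % p ^ j = s + p ^ (j - 1) * (p - 1)` is the last element of its class modulo `p ^ (j - 1)`,
  -- and `transversalSum * e₁₁ = 0` expresses it through the earlier ones.
  obtain ⟨s, hs⟩ := Nat.exists_eq_add_of_le' hge
  have hs_lt : s < p ^ (j - 1) := by
    have := Nat.mod_lt k (pow_pos hp.pos j)
    omega
  have hzero : ∑ t ∈ range p,
      of F _ (r ((s + p ^ (j - 1) * t : ℕ) : ZMod (p ^ m))) * e₁₁ F p m j = 0 := by
    have := congrArg (of F _ (r (s : ZMod (p ^ m))) * ·) (transversalSum_mul_e₁₁ hp hj hjm hpF)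
    simpa only [mul_zero, ← mul_assoc, transversalSum, mul_sum, sum_mul, ← map_mul, r_mul_r,
      Nat.cast_add] using this
  have hsplit := sum_range_succ
    (fun t => of F _ (r ((s + p ^ (j - 1) * t : ℕ) : ZMod (p ^ m))) * e₁₁ F p m j) (p - 1)
  rw [Nat.sub_add_cancel hp.one_le, hzero] at hsplit
  rw [hs, eq_neg_of_add_eq_zero_right hsplit.symm]
  refine Submodule.neg_mem _ (Submodule.sum_mem _ fun t ht => hmem _ ?_)
  have : t + 1 ≤ p - 1 := mem_range.mp ht
  nlinarith

theorem restrictScalars_span_e₁₁_eq_span_rotatedE₁₁ (hp : p.Prime) (hj : 1 ≤ j) (hjm : j ≤ m)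
    (hpF : (p : F) ≠ 0) :
    (Ideal.span {e₁₁ F p m j}).restrictScalars F =
      Submodule.span F (Set.range (rotatedE₁₁ F p m j)) := by
  refine le_antisymm (fun α hα => ?_) (Submodule.span_le.mpr ?_)
  · obtain ⟨a, rfl⟩ := Ideal.mem_span_singleton'.mp hα
    clear hα
    induction a using MonoidAlgebra.induction_linear with
    | zero => simp
    | add a b ha hb => exact add_mul a b _ ▸ Submodule.add_mem _ ha hb
    | single x c =>
      rw [← mul_one c, ← smul_single', ← of_apply, smul_mul_assoc]
      refine Submodule.smul_mem _ c ?_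
      cases x with
      | r i => simpa using of_r_mul_e₁₁_mem_span hp hj hjm hpF i.val
      | sr i =>
        rw [of_sr_mul_e₁₁]
        simpa using of_r_mul_e₁₁_mem_span hp hj hjm hpF (-i).val
  · rintro _ ⟨i, rfl⟩
    exact Ideal.mul_mem_left _ _ (Ideal.subset_span rfl)

theorem coeff_of_r_mul_e₁₁ (hp : p.Prime) (hjm : j ≤ m) {i k : ℕ} (hi : i < p ^ j)
    (hk : k < p ^ j) :
    (of F _ (r (i : ZMod (p ^ m))) * e₁₁ F p m j).coeff (r (k : ZMod (p ^ m))) =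
      (if i = k then ((2 * p ^ (m - j) : ℕ) : F)⁻¹ else 0) -
        if i ≡ k [MOD p ^ (j - 1)] then ((2 * p ^ (m - (j - 1)) : ℕ) : F)⁻¹ else 0 := by
  rw [coeff_of_mul, inv_r, r_mul_r, e₁₁, coeff_sub, Finsupp.sub_apply,
    coeff_hat_dihedralSubgroup_ppowMultiples hp hjm,
    coeff_hat_dihedralSubgroup_ppowMultiples hp (hjm.trans' (Nat.sub_le j 1)), zmodPart_r,
    neg_add_eq_sub, natCast_sub_mem_ppowMultiples_iff hjm,
    natCast_sub_mem_ppowMultiples_iff (hjm.trans' (Nat.sub_le j 1))]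
  have hiff : i ≡ k [MOD p ^ j] ↔ i = k := ⟨fun h => h.eq_of_lt_of_lt hi hk, fun h => h ▸ rfl⟩
  simp only [hiff]
  congr

theorem linearIndependent_rotatedE₁₁ (hp : p.Prime) (hj : 1 ≤ j) (hjm : j ≤ m)
    (h2 : (2 : F) ≠ 0) (hpF : (p : F) ≠ 0) :
    LinearIndependent F (rotatedE₁₁ F p m j) := by
  set c := p ^ (j - 1)
  have hpj : p ^ j = c * (p - 1) + c := by
    rw [← mul_add_one, Nat.sub_add_cancel hp.one_le, ← pow_succ, Nat.sub_add_cancel hj]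
  have hne : ∀ d : ℕ, ((2 * p ^ d : ℕ) : F)⁻¹ ≠ 0 := fun d => by
    push_cast
    exact inv_ne_zero (mul_ne_zero h2 (pow_ne_zero d hpF))
  rw [Fintype.linearIndependent_iff]
  intro g hg i₀
  have hcoeff : ∀ k < p ^ j,
      (∑ i ∈ univ.filter fun i : Fin (c * (p - 1)) => (i : ℕ) = k, g i) *
          ((2 * p ^ (m - j) : ℕ) : F)⁻¹ =
        (∑ i ∈ univ.filter fun i : Fin (c * (p - 1)) => (i : ℕ) ≡ k [MOD c], g i) *
          ((2 * p ^ (m - (j - 1)) : ℕ) : F)⁻¹ := by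
    intro k hk
    have := congrArg (fun α => α.coeff (r (k : ZMod (p ^ m)))) hg
    simp only [coeff_sum, Finsupp.finsetSum_apply, coeff_smul_apply, smul_eq_mul, rotatedE₁₁,
      coeff_of_r_mul_e₁₁ hp hjm (lt_of_lt_of_le (Fin.is_lt _) (hpj ▸ Nat.le_add_right _ _)) hk,
      mul_sub, sum_sub_distrib, mul_ite, mul_zero, ← sum_filter, ← sum_mul] at this
    exact sub_eq_zero.mp this
  -- The class of `i₀` modulo `c` sums to zero: read it off at its representative `≥ c * (p - 1)`.
  have hclass : ∑ i ∈ univ.filter fun i : Fin (c * (p - 1)) => (i : ℕ) ≡ i₀ [MOD c], g i = 0 := by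
    have hk₁ : (i₀ : ℕ) ≡ i₀ % c + c * (p - 1) [MOD c] := by
      simp [Nat.ModEq, Nat.add_mul_mod_self_left]
    have := hcoeff (i₀ % c + c * (p - 1))
      (by have := Nat.mod_lt i₀ (show 0 < c from pow_pos hp.pos _); omega)
    rw [filter_false_of_mem fun i _ => by have := i.is_lt; omega, sum_empty, zero_mul,
      eq_comm, mul_eq_zero] at this
    rw [← this.resolve_right (hne _)]
    exact sum_congr (filter_congr fun i _ => ⟨fun h => h.trans hk₁, fun h => h.trans hk₁.symm⟩)
      fun _ _ => rfl
  have := hcoeff i₀ (lt_of_lt_of_le i₀.is_lt (hpj ▸ Nat.le_add_right _ _))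
  rw [hclass, zero_mul, mul_eq_zero] at this
  simpa [Fin.val_inj, filter_eq'] using this.resolve_right (hne _)

theorem finrank_span_e₁₁ (hp : p.Prime) (hj : 1 ≤ j) (hjm : j ≤ m) (h2 : (2 : F) ≠ 0)
    (hpF : (p : F) ≠ 0) :
    Module.finrank F ((Ideal.span {e₁₁ F p m j}).restrictScalars F) = (p ^ j).totient := by
  rw [restrictScalars_span_e₁₁_eq_span_rotatedE₁₁ hp hj hjm hpF,
    finrank_span_eq_card (linearIndependent_rotatedE₁₁ hp hj hjm h2 hpF), Fintype.card_fin,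
    Nat.totient_prime_pow hp hj]

end Dimension

section Weight

variable {F : Type*} [Field F] {p m j : ℕ} [NeZero (p ^ m)]

theorem mul_of_eq_self_of_mem_span {α : MonoidAlgebra F (DihedralGroup (p ^ m))}
    (hα : α ∈ Ideal.span {e₁₁ F p m j}) {x : DihedralGroup (p ^ m)}
    (hx : x ∈ dihedralSubgroup (ppowMultiples p m j)) : α * of F _ x = α := by
  obtain ⟨a, rfl⟩ := Ideal.mem_span_singleton'.mp hα
  rw [mul_assoc, e₁₁_mul_of hx]

theorem mul_transversalSum_of_mem_span (hp : p.Prime) (hj : 1 ≤ j) (hjm : j ≤ m)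
    (hpF : (p : F) ≠ 0) {α : MonoidAlgebra F (DihedralGroup (p ^ m))}
    (hα : α ∈ Ideal.span {e₁₁ F p m j}) : α * transversalSum F p m j = 0 := by
  obtain ⟨a, rfl⟩ := Ideal.mem_span_singleton'.mp hα
  rw [mul_assoc, e₁₁_mul_transversalSum hp hj hjm hpF, mul_zero]

theorem four_mul_ppow_le_wt_of_mem_span (hp : p.Prime) (hj : 1 ≤ j) (hjm : j ≤ m)
    (hpF : (p : F) ≠ 0)
    {α : MonoidAlgebra F (DihedralGroup (p ^ m))} (hα : α ∈ Ideal.span {e₁₁ F p m j})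
    (hne : α ≠ 0) : 4 * p ^ (m - j) ≤ wt α := by
  have hb := mul_of_eq_self_of_mem_span hα (x := sr 0) (ppowMultiples p m j).zero_mem
  have hper : ∀ i v, i - v ∈ ppowMultiples p m j → α.coeff (r i) = α.coeff (r v) := by
    intro i v h
    have := congrArg (fun β => β.coeff (r i)) (mul_of_eq_self_of_mem_span hα (x := r (i - v)) h)
    simpa [coeff_mul_of, r_mul_r] using this.symm
  have hsum : ∀ i, ∑ t ∈ range p,
      α.coeff (r (i - ((p ^ (j - 1) * t : ℕ) : ZMod (p ^ m)))) = 0 := by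
    intro i
    have := congrArg (fun β => β.coeff (r i)) (mul_transversalSum_of_mem_span hp hj hjm hpF hα)
    simpa [transversalSum, mul_sum, coeff_sum, coeff_mul_of, r_mul_r, sub_eq_add_neg] using this
  obtain ⟨i₀, hi₀⟩ : ∃ i, α.coeff (r i) ≠ 0 := by
    by_contra! h
    refine hne (MonoidAlgebra.ext (Finsupp.ext fun x => ?_))
    cases x with
    | r i => exact h i
    | sr i => exact (coeff_sr_of_mul_sr_zero hb i).trans (h _)
  -- The zero sum over `t < p` through `i₀` has a second nonzero term.
  obtain ⟨t, ht, hti⟩ : ∃ t < p - 1,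
      α.coeff (r (i₀ - ((p ^ (j - 1) * (t + 1) : ℕ) : ZMod (p ^ m)))) ≠ 0 := by
    by_contra! h
    have hsplit := sum_range_succ' (fun t => α.coeff
      (r (i₀ - ((p ^ (j - 1) * t : ℕ) : ZMod (p ^ m))))) (p - 1)
    rw [Nat.sub_add_cancel hp.one_le, hsum, sum_eq_zero fun t ht => h t (mem_range.mp ht)]
      at hsplit
    simp only [mul_zero, Nat.cast_zero, sub_zero, zero_add] at hsplit
    exact hi₀ hsplit.symm
  have hnot :
      (i₀ - ((p ^ (j - 1) * (t + 1) : ℕ) : ZMod (p ^ m))) - i₀ ∉ ppowMultiples p m j := by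
    rw [sub_sub_cancel_left, neg_mem_iff]
    exact natCast_ppow_pred_mul_notMem hp hj hjm t.succ_pos (by omega)
  rw [wt_eq_two_mul_of_mul_sr_zero hb, show 4 * p ^ (m - j) = 2 * (2 * p ^ (m - j)) by ring,
    ← natCard_ppowMultiples hp hjm]
  exact Nat.mul_le_mul_left 2
    ((ppowMultiples p m j).two_mul_natCard_le_card_filter_ne_zero hper hi₀ hti hnot)

theorem e₁₁_sub_of_mul_e₁₁_mem_span (x : DihedralGroup (p ^ m)) :
    e₁₁ F p m j - of F _ x * e₁₁ F p m j ∈ Ideal.span {e₁₁ F p m j} := by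
  rw [← one_sub_mul]
  exact Ideal.mul_mem_left _ _ (Ideal.mem_span_singleton_self _)

theorem wt_e₁₁_sub_of_r_mul_e₁₁ (hp : p.Prime) (hj : 1 ≤ j) (hjm : j ≤ m) (h2 : (2 : F) ≠ 0)
    (hpF : (p : F) ≠ 0) :
    wt (e₁₁ F p m j - of F _ (r ((p ^ (j - 1) : ℕ) : ZMod (p ^ m))) * e₁₁ F p m j) =
      4 * p ^ (m - j) := by
  set c : ZMod (p ^ m) := ((p ^ (j - 1) : ℕ) : ZMod (p ^ m))
  set u : F := ((2 * p ^ (m - j) : ℕ) : F)⁻¹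
  have hu : u ≠ 0 := by
    simp only [u]
    push_cast
    exact inv_ne_zero (mul_ne_zero h2 (pow_ne_zero _ hpF))
  have hc : c - 0 ∉ ppowMultiples p m j := by
    simpa only [c, sub_zero, mul_one] using
      natCast_ppow_pred_mul_notMem hp hj hjm one_pos hp.one_lt
  have hg : r c ∈ dihedralSubgroup (ppowMultiples p m (j - 1)) := by
    simpa only [c, mul_one] using r_natCast_ppow_mul_mem (p := p) (m := m) (j - 1) 1
  have hcoeff : ∀ i, (e₁₁ F p m j - of F _ (r c) * e₁₁ F p m j).coeff (r i) =
      (if i ∈ ppowMultiples p m j then u else 0) -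
        if i - c ∈ ppowMultiples p m j then u else 0 := by
    intro i
    rw [e₁₁, mul_sub, of_mul_hat hg,
      sub_sub_sub_cancel_right, coeff_sub, Finsupp.sub_apply, coeff_of_mul,
      coeff_hat_dihedralSubgroup_ppowMultiples hp hjm,
      coeff_hat_dihedralSubgroup_ppowMultiples hp hjm, inv_r, r_mul_r, zmodPart_r, zmodPart_r,
      neg_add_eq_sub]
  have hsupport : #{i | (e₁₁ F p m j - of F _ (r c) * e₁₁ F p m j).coeff (r i) ≠ 0} =
      #{i | i - 0 ∈ ppowMultiples p m j ∨ i - c ∈ ppowMultiples p m j} := by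
    refine congrArg Finset.card (filter_congr fun i _ => ?_)
    rw [hcoeff, sub_zero]
    by_cases h₁ : i ∈ ppowMultiples p m j <;> by_cases h₂ : i - c ∈ ppowMultiples p m j
    · exact absurd (by simpa using sub_mem h₁ h₂) hc
    all_goals simp [h₁, h₂, hu]
  have hb := mul_of_eq_self_of_mem_span (e₁₁_sub_of_mul_e₁₁_mem_span (F := F) (r c))
    (x := sr 0) (ppowMultiples p m j).zero_mem
  rw [wt_eq_two_mul_of_mul_sr_zero hb, hsupport, AddSubgroup.card_filter_sub_mem_or_sub_mem _ hc,
    natCard_ppowMultiples hp hjm]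
  ring

theorem isLeast_wt_span_e₁₁ (hp : p.Prime) (hj : 1 ≤ j) (hjm : j ≤ m) (h2 : (2 : F) ≠ 0)
    (hpF : (p : F) ≠ 0) :
    IsLeast {n : ℕ | ∃ α ∈ Ideal.span {e₁₁ F p m j}, α ≠ 0 ∧ wt α = n} (4 * p ^ (m - j)) := by
  have hwt := wt_e₁₁_sub_of_r_mul_e₁₁ hp hj hjm h2 hpF
  refine ⟨⟨_, e₁₁_sub_of_mul_e₁₁_mem_span _, fun h => ?_, hwt⟩, fun n ⟨α, hα, hne, hn⟩ =>
    hn ▸ four_mul_ppow_le_wt_of_mem_span hp hj hjm hpF hα hne⟩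
  simp only [h, wt, MonoidAlgebra.coeff_zero, Finsupp.support_zero, card_empty] at hwt
  exact (pow_pos hp.pos (m - j)).ne' (by omega)

end Weight

end DihedralGroup

theorem stmt6_general {F : Type*} [Field F] (p m j : ℕ) (hp : p.Prime)
    (hj : 1 ≤ j) (hjm : j ≤ m) (hchar : ((2 * p ^ m : ℕ) : F) ≠ 0)
    [NeZero (p ^ m)] :
    let D := DihedralGroup (p ^ m)
    let a : D := DihedralGroup.r 1
    let b : D := DihedralGroup.sr 0
    let ej : MonoidAlgebra F D :=
      hat F (Subgroup.zpowers (a ^ p ^ j)) -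
        hat F (Subgroup.zpowers (a ^ p ^ (j - 1)))
    let e₁₁ : MonoidAlgebra F D :=
      ((2 : F)⁻¹ • (1 + MonoidAlgebra.of F D b)) * ej
    e₁₁ = hat F (Subgroup.closure {b, a ^ p ^ j}) -
        hat F (Subgroup.closure {b, a ^ p ^ (j - 1)}) ∧
      Module.finrank F (Submodule.restrictScalars F (Ideal.span {e₁₁})) =
        (p ^ j).totient ∧
      IsLeast {n : ℕ | ∃ α ∈ Ideal.span {e₁₁}, α ≠ 0 ∧ wt α = n}
        (4 * p ^ (m - j)) := by
  intro D a b ej e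
  have h2p : (2 : F) * (p : F) ^ m ≠ 0 := by exact_mod_cast hchar
  have h2 : (2 : F) ≠ 0 := left_ne_zero_of_mul h2p
  have hpF : (p : F) ≠ 0 := fun h => h2p (by rw [h, zero_pow (by omega), mul_zero])
  have he : e = e₁₁ F p m j := by
    simp only [e, ej, a, b, D]
    rw [mul_sub, r_one_pow, r_one_pow, half_one_add_sr_zero_mul_hat_zpowers,
      half_one_add_sr_zero_mul_hat_zpowers]
    rfl
  refine ⟨?_, ?_, ?_⟩ <;> rw [he]
  · simp only [a, b, D]
    rw [r_one_pow, r_one_pow, closure_sr_zero_r, closure_sr_zero_r]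
    rfl
  · exact finrank_span_e₁₁ hp hj hjm h2 hpF
  · exact isLeast_wt_span_e₁₁ hp hj hjm h2 hpF

theorem stmt6 {F : Type*} [Field F] (p m j : ℕ) (hp : p.Prime) (hodd : Odd p)
    (hj : 1 ≤ j) (hjm : j ≤ m) (hchar : ((2 * p ^ m : ℕ) : F) ≠ 0)
    [NeZero (p ^ m)] :
    let D := DihedralGroup (p ^ m)
    let a : D := DihedralGroup.r 1
    let b : D := DihedralGroup.sr 0
    let ej : MonoidAlgebra F D :=
      hat F (Subgroup.zpowers (a ^ p ^ j)) -
        hat F (Subgroup.zpowers (a ^ p ^ (j - 1)))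
    let e₁₁ : MonoidAlgebra F D :=
      ((2 : F)⁻¹ • (1 + MonoidAlgebra.of F D b)) * ej
    e₁₁ = hat F (Subgroup.closure {b, a ^ p ^ j}) -
        hat F (Subgroup.closure {b, a ^ p ^ (j - 1)}) ∧
      Module.finrank F (Submodule.restrictScalars F (Ideal.span {e₁₁})) =
        (p ^ j).totient ∧
      IsLeast {n : ℕ | ∃ α ∈ Ideal.span {e₁₁}, α ≠ 0 ∧ wt α = n}
        (4 * p ^ (m - j)) :=
  stmt6_general p m j hp hj hjm hchar
end
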